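/- arXiv:math/9403218 — 3 statements merged into one kernel-verified Lean document; each statement's English description precedes it below -/
import Mathlib

section
/- Let μ be a fixed n×n complex matrix and define on the free complex vector space with basis {L_{ij} : 1 ≤ i,j ≤ n} the antisymmetric bilinear bracket [L_{ir}, L_{js}] = -μ_{jr} L_{is} + μ_{is} L_{jr}. Then this bracket satisfies the Jacobi identity, so it defines a Lie algebra structure. -/
/-- The free complex vector space with basis `L_{ij}`, `1 ≤ i,j ≤ n`. -/
abbrev FreeG (n : ℕ) := (Fin n × Fin n) →₀ ℂ

/-- The bracket on basis elements: `[L_{ir}, L_{js}] = -μ_{jr} L_{is} + μ_{is} L_{jr}`. -/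
noncomputable def basisBracket {n : ℕ} (μ : Matrix (Fin n) (Fin n) ℂ)
    (p q : Fin n × Fin n) : FreeG n :=
  (-(μ q.1 p.2)) • Finsupp.single (p.1, q.2) (1 : ℂ)
    + (μ p.1 q.2) • Finsupp.single (q.1, p.2) (1 : ℂ)

/-- The bilinear extension of the bracket to the whole free vector space. -/
noncomputable def bracket {n : ℕ} (μ : Matrix (Fin n) (Fin n) ℂ)
    (f g : FreeG n) : FreeG n :=
  f.sum fun p a => g.sum fun q b => (a * b) • basisBracket μ p q

section Aux

variable {n : ℕ} (μ : Matrix (Fin n) (Fin n) ℂ)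

lemma bracket_zero_left (g : FreeG n) : bracket μ 0 g = 0 := by
  simp [bracket]

lemma bracket_zero_right (f : FreeG n) : bracket μ f 0 = 0 := by
  simp [bracket]

lemma bracket_add_left (f₁ f₂ g : FreeG n) :
    bracket μ (f₁ + f₂) g = bracket μ f₁ g + bracket μ f₂ g := by
  simp [bracket, Finsupp.sum_add_index', add_mul, add_smul, Finsupp.sum_add]

lemma bracket_add_right (f g₁ g₂ : FreeG n) :
    bracket μ f (g₁ + g₂) = bracket μ f g₁ + bracket μ f g₂ := by
  simp only [bracket]
  rw [← Finsupp.sum_add]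
  apply Finsupp.sum_congr
  intro p _
  simp [Finsupp.sum_add_index', mul_add, add_smul]

lemma bracket_smul_left (c : ℂ) (f g : FreeG n) :
    bracket μ (c • f) g = c • bracket μ f g := by
  simp [bracket, Finsupp.sum_smul_index', Finsupp.smul_sum, mul_assoc, smul_smul]

lemma bracket_smul_right (c : ℂ) (f g : FreeG n) :
    bracket μ f (c • g) = c • bracket μ f g := by
  simp only [bracket, Finsupp.smul_sum]
  apply Finsupp.sum_congr
  intro p _
  rw [Finsupp.sum_smul_index']
  · exact Finsupp.sum_congr fun q _ => by rw [smul_eq_mul, smul_smul]; ring_nf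
  · simp

lemma bracket_single_single (p q : Fin n × Fin n) (a b : ℂ) :
    bracket μ (Finsupp.single p a) (Finsupp.single q b)
      = (a * b) • basisBracket μ p q := by
  simp [bracket, Finsupp.sum_single_index]

lemma jacobi_single (p q r : Fin n × Fin n) :
    bracket μ (Finsupp.single p 1) (bracket μ (Finsupp.single q 1) (Finsupp.single r 1))
      + bracket μ (Finsupp.single q 1) (bracket μ (Finsupp.single r 1) (Finsupp.single p 1))
      + bracket μ (Finsupp.single r 1) (bracket μ (Finsupp.single p 1) (Finsupp.single q 1)) = 0 := by
  simp only [bracket_single_single, one_mul, basisBracket, bracket_add_right,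
    bracket_smul_right, bracket_single_single, smul_add, smul_smul]
  module

end Aux

/-- The antisymmetric bilinear bracket `[L_{ir}, L_{js}] = -μ_{jr} L_{is} + μ_{is} L_{jr}`
satisfies the Jacobi identity. -/
theorem bracket_jacobi {n : ℕ} (μ : Matrix (Fin n) (Fin n) ℂ)
    (f g h : FreeG n) :
    bracket μ f (bracket μ g h) + bracket μ g (bracket μ h f)
      + bracket μ h (bracket μ f g) = 0 := by
  induction f using Finsupp.induction_linear with
  | zero => simp [bracket_zero_left, bracket_zero_right]
  | add f₁ f₂ h₁ h₂ =>
      simp only [bracket_add_left, bracket_add_right] at *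
      linear_combination (norm := module) h₁ + h₂
  | single p a =>
      induction g using Finsupp.induction_linear with
      | zero => simp [bracket_zero_left, bracket_zero_right]
      | add g₁ g₂ h₁ h₂ =>
          simp only [bracket_add_left, bracket_add_right] at *
          linear_combination (norm := module) h₁ + h₂
      | single q b =>
          induction h using Finsupp.induction_linear with
          | zero => simp [bracket_zero_left, bracket_zero_right]
          | add h₁ h₂ ih₁ ih₂ =>
              simp only [bracket_add_left, bracket_add_right] at *
              linear_combination (norm := module) ih₁ + ih₂
          | single r c =>
              have := jacobi_single μ p q r
              have e : ∀ (s : Fin n × Fin n) (x : ℂ),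
                  (Finsupp.single s x : FreeG n) = x • Finsupp.single s 1 := by
                intro s x; simp [Finsupp.smul_single]
              rw [e p a, e q b, e r c]
              simp only [bracket_smul_left, bracket_smul_right, smul_smul]
              linear_combination (norm := module) (a * b * c) • this
end

section
/- Shift relations for a terminating hypergeometric family: fix n ∈ {1,2,…} and define F_k(x) = ((n+k)!/k!) (1−x)^{−n+k} ₂F₁(−n+k, n+k+1; k+1; x) for k = 0,1,…,n. Then (x∂_x − n/(1−x) + n + k) F_k = (n+k) F_{k−1} for 1 ≤ k ≤ n, and ((1−x)∂_x − n + k) F_k = −(n−k) F_{k+1} for 0 ≤ k ≤ n−1, as identities of functions on (−1, 1) minus {1}. -/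
open Finset in
/-- `F_k(x) = ((n+k)!/k!) (1-x)^{k-n} ₂F₁(-n+k, n+k+1; k+1; x)`, where the terminating
hypergeometric series is the polynomial `Σ_j ((k-n)_j (n+k+1)_j / ((k+1)_j j!)) x^j`. -/
noncomputable def Fshift (n k : ℕ) (x : ℝ) : ℝ :=
  (((n + k).factorial : ℝ) / (k.factorial : ℝ)) * (1 - x) ^ ((k : ℤ) - (n : ℤ)) *
    ∑ j ∈ Finset.range (n + 1),
      ((ascPochhammer ℝ j).eval ((k : ℝ) - n) * (ascPochhammer ℝ j).eval ((n : ℝ) + k + 1)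
        / ((ascPochhammer ℝ j).eval ((k : ℝ) + 1) * (j.factorial : ℝ))) * x ^ j

open Finset Polynomial

lemma asc_succ_left_eval (j : ℕ) (x : ℝ) :
    (ascPochhammer ℝ (j+1)).eval x = x * (ascPochhammer ℝ j).eval (x+1) := by
  rw [ascPochhammer_succ_left, eval_mul, eval_X, eval_comp, eval_add, eval_X, eval_one]

lemma asc_neg_nat (j i : ℕ) (h : i < j) : (ascPochhammer ℝ j).eval (-(i:ℝ)) = 0 := by
  induction j with
  | zero => omega
  | succ j ih =>
    rw [ascPochhammer_succ_eval]
    rcases Nat.lt_succ_iff_lt_or_eq.mp h with h | h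
    · rw [ih h, zero_mul]
    · subst h; simp

noncomputable def aco (n k j : ℕ) : ℝ :=
  (ascPochhammer ℝ j).eval ((k : ℝ) - n) * (ascPochhammer ℝ j).eval ((n : ℝ) + k + 1)
    / ((ascPochhammer ℝ j).eval ((k : ℝ) + 1) * (j.factorial : ℝ))

lemma aco_zero (n k : ℕ) : aco n k 0 = 1 := by simp [aco]

lemma aco_top (n k : ℕ) (h1 : 1 ≤ k) (h2 : k ≤ n) : aco n k n = 0 := by
  have : (k : ℝ) - n = -(((n - k : ℕ)) : ℝ) := by push_cast [Nat.cast_sub h2]; ring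
  rw [aco, this, asc_neg_nat n (n-k) (by omega), zero_mul, zero_div]

lemma idA (n k j : ℕ) : ((j:ℝ)+1) * aco n k (j+1)
    = (((k:ℝ)-n) * ((n:ℝ)+k+1) / ((k:ℝ)+1)) * aco n (k+1) j := by
  have e1 := asc_succ_left_eval j ((k:ℝ) - n)
  have e2 := asc_succ_left_eval j ((n:ℝ) + k + 1)
  have e3 := asc_succ_left_eval j ((k:ℝ) + 1)
  rw [show (k:ℝ)-n+1 = ((k:ℝ)+1)-(n:ℝ) from by ring] at e1
  rw [show (n:ℝ)+k+1+1 = (n:ℝ)+((k:ℝ)+1)+1 from by ring] at e2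
  have hC : 0 < (ascPochhammer ℝ j).eval ((k:ℝ)+1+1) := ascPochhammer_pos j _ (by positivity)
  have hK : (0:ℝ) < (k:ℝ)+1 := by positivity
  have hf : ((j.factorial : ℝ)) ≠ 0 := by positivity
  rw [aco, aco, e1, e2, e3, Nat.factorial_succ]
  push_cast
  field_simp

lemma idB (n k j : ℕ) :
    ((j:ℝ)+1+((k:ℝ)+1)) * aco n (k+1) (j+1)
      = ((j:ℝ)+2*((k:ℝ)+1)) * aco n (k+1) j + ((k:ℝ)+1) * aco n k (j+1) := by
  rw [aco, aco, aco]
  simp only [Nat.factorial_succ]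
  push_cast
  rw [ascPochhammer_succ_eval j ((k:ℝ) + 1 - n),
      ascPochhammer_succ_eval j ((n:ℝ) + ((k:ℝ)+1) + 1),
      ascPochhammer_succ_eval j ((k:ℝ) + 1 + 1),
      asc_succ_left_eval j ((k:ℝ) - n),
      asc_succ_left_eval j ((n:ℝ) + k + 1),
      asc_succ_left_eval j ((k:ℝ) + 1),
      show (k:ℝ) - n + 1 = (k:ℝ) + 1 - n from by ring,
      show (n:ℝ) + k + 1 + 1 = (n:ℝ) + ((k:ℝ)+1) + 1 from by ring]
  have hC : 0 < (ascPochhammer ℝ j).eval ((k:ℝ)+1+1) := ascPochhammer_pos j _ (by positivity)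
  have hf : ((j.factorial : ℝ)) ≠ 0 := by positivity
  have h1 : (0:ℝ) < (k:ℝ)+1+1+(j:ℝ) := by positivity
  have h2 : (0:ℝ) < (k:ℝ)+1 := by positivity
  have h3 : (0:ℝ) < (j:ℝ)+1 := by positivity
  field_simp
  ring

lemma sumA (n k : ℕ) (hk : k + 1 ≤ n) (x : ℝ) :
    ∑ j ∈ range (n+1), aco n k j * ((j:ℝ) * x^(j-1))
      = (((k:ℝ)-n) * ((n:ℝ)+k+1) / ((k:ℝ)+1)) * ∑ j ∈ range (n+1), aco n (k+1) j * x^j := by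
  rw [Finset.sum_range_succ' (fun j => aco n k j * ((j:ℝ) * x^(j-1))) n,
      Finset.mul_sum, Finset.sum_range_succ (fun j =>
        ((k:ℝ)-n) * ((n:ℝ)+k+1) / ((k:ℝ)+1) * (aco n (k+1) j * x^j)) n,
      aco_top n (k+1) (by omega) hk]
  norm_num
  refine Finset.sum_congr rfl fun i _ => ?_
  have h := idA n k i
  push_cast [Nat.add_sub_cancel] at h ⊢
  linear_combination x^i * h

lemma sumB (n k : ℕ) (hk2 : k + 1 ≤ n) (x : ℝ) :
    ∑ j ∈ range (n+1), ((j:ℝ)+((k:ℝ)+1)) * aco n (k+1) j * x^j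
      = ((k:ℝ)+1) * ∑ j ∈ range (n+1), aco n k j * x^j
        + ∑ j ∈ range (n+1), ((j:ℝ)+2*((k:ℝ)+1)) * aco n (k+1) j * x^(j+1) := by
  rw [Finset.sum_range_succ' (fun j => ((j:ℝ)+((k:ℝ)+1)) * aco n (k+1) j * x^j) n,
      Finset.sum_range_succ (fun j => ((j:ℝ)+2*((k:ℝ)+1)) * aco n (k+1) j * x^(j+1)) n,
      Finset.sum_range_succ' (fun j => aco n k j * x^j) n,
      aco_top n (k+1) (by omega) hk2, aco_zero, aco_zero]
  have key : ∀ i ∈ Finset.range n,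
      ((((i+1:ℕ)):ℝ)+((k:ℝ)+1)) * aco n (k+1) (i+1) * x^(i+1)
        = ((k:ℝ)+1) * (aco n k (i+1) * x^(i+1))
          + ((((i:ℕ)):ℝ)+2*((k:ℝ)+1)) * aco n (k+1) i * x^(i+1) := by
    intro i _
    have h := idB n k i
    push_cast at h ⊢
    linear_combination x^(i+1) * h
  rw [Finset.sum_congr rfl key, Finset.sum_add_distrib, mul_add ((k:ℝ)+1), Finset.mul_sum]
  push_cast
  ring

lemma sumB' (n k : ℕ) (hk2 : k+1 ≤ n) (x : ℝ) :
    x*(1-x) * (∑ j ∈ range (n+1), aco n (k+1) j * ((j:ℝ) * x^(j-1)))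
      + ((k:ℝ)+1)*(1-2*x) * (∑ j ∈ range (n+1), aco n (k+1) j * x^j)
    = ((k:ℝ)+1) * ∑ j ∈ range (n+1), aco n k j * x^j := by
  have hB := sumB n k hk2 x
  have e1 : ∑ j ∈ range (n+1), ((j:ℝ)+((k:ℝ)+1)) * aco n (k+1) j * x^j
      = x * (∑ j ∈ range (n+1), aco n (k+1) j * ((j:ℝ) * x^(j-1)))
        + ((k:ℝ)+1) * ∑ j ∈ range (n+1), aco n (k+1) j * x^j := by
    rw [Finset.mul_sum, Finset.mul_sum, ← Finset.sum_add_distrib]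
    refine Finset.sum_congr rfl fun j _ => ?_
    cases j with
    | zero => norm_num
    | succ i => push_cast [Nat.add_sub_cancel]; ring
  have e2 : ∑ j ∈ range (n+1), ((j:ℝ)+2*((k:ℝ)+1)) * aco n (k+1) j * x^(j+1)
      = x * (∑ j ∈ range (n+1), ((j:ℝ)+((k:ℝ)+1)) * aco n (k+1) j * x^j)
        + ((k:ℝ)+1) * x * ∑ j ∈ range (n+1), aco n (k+1) j * x^j := by
    rw [Finset.mul_sum, Finset.mul_sum, ← Finset.sum_add_distrib]
    refine Finset.sum_congr rfl fun j _ => ?_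
    ring
  linear_combination (x-1)*e1 + hB + e2

lemma Fshift_eq (n k : ℕ) (x : ℝ) : Fshift n k x
    = (((n + k).factorial : ℝ) / (k.factorial : ℝ)) * ((1 - x) ^ ((k : ℤ) - (n : ℤ)) *
      ∑ j ∈ Finset.range (n + 1), aco n k j * x ^ j) := by
  rw [Fshift, mul_assoc]; rfl

lemma Fshift_hasDerivAt (n k : ℕ) (x : ℝ) (hx : (1:ℝ) - x ≠ 0) :
    HasDerivAt (Fshift n k)
      ((((n+k).factorial : ℝ) / (k.factorial : ℝ)) *
        ((((k:ℤ)-(n:ℤ) : ℤ) : ℝ) * (1-x) ^ ((k:ℤ)-(n:ℤ)-1) * (-1) *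
            (∑ j ∈ Finset.range (n+1), aco n k j * x^j)
          + (1-x) ^ ((k:ℤ)-(n:ℤ)) *
            ∑ j ∈ Finset.range (n+1), aco n k j * ((j:ℝ) * x^(j-1)))) x := by
  have hc : HasDerivAt (fun y : ℝ => 1 - y) (-1) x := by
    simpa using (hasDerivAt_id x).const_sub 1
  have h1 : HasDerivAt (fun y : ℝ => (1-y)^((k:ℤ)-(n:ℤ)))
      ((((k:ℤ)-(n:ℤ) : ℤ) : ℝ) * (1-x) ^ ((k:ℤ)-(n:ℤ)-1) * (-1)) x :=
    (hasDerivAt_zpow ((k:ℤ)-(n:ℤ)) (1-x) (Or.inl hx)).comp x hc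
  have h2 : HasDerivAt (fun y : ℝ => ∑ j ∈ Finset.range (n+1), aco n k j * y^j)
      (∑ j ∈ Finset.range (n+1), aco n k j * ((j:ℝ) * x^(j-1))) x :=
    HasDerivAt.fun_sum fun j _ => (hasDerivAt_pow j x).const_mul (aco n k j)
  have h3 := (h1.mul h2).const_mul (((n+k).factorial : ℝ) / (k.factorial : ℝ))
  have hF : Fshift n k = fun y => (((n+k).factorial : ℝ) / (k.factorial : ℝ)) *
      ((1-y)^((k:ℤ)-(n:ℤ)) * ∑ j ∈ Finset.range (n+1), aco n k j * y^j) := by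
    funext y; exact Fshift_eq n k y
  rw [hF]
  exact h3

/-- Shift relations for the terminating hypergeometric family `F_k`, `0 ≤ k ≤ n`:
`(x∂ₓ - n/(1-x) + n + k) F_k = (n+k) F_{k-1}` for `1 ≤ k ≤ n` and
`((1-x)∂ₓ - n + k) F_k = -(n-k) F_{k+1}` for `0 ≤ k ≤ n-1`, on `(-1, 1)`. -/
theorem Fshift_relations (n : ℕ) (hn : 1 ≤ n) (x : ℝ) (hx1 : -1 < x) (hx2 : x < 1) :
    (∀ k : ℕ, 1 ≤ k → k ≤ n →
      x * deriv (Fshift n k) x - (n : ℝ) / (1 - x) * Fshift n k x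
          + ((n : ℝ) + k) * Fshift n k x
        = ((n : ℝ) + k) * Fshift n (k - 1) x)
    ∧ (∀ k : ℕ, k + 1 ≤ n →
      (1 - x) * deriv (Fshift n k) x + (-(n : ℝ) + k) * Fshift n k x
        = -((n : ℝ) - k) * Fshift n (k + 1) x) := by
  have hx : (1:ℝ) - x ≠ 0 := sub_ne_zero.mpr (by linarith)
  constructor
  · intro k hk1 hk2
    obtain ⟨m, rfl⟩ : ∃ m, k = m + 1 := ⟨k - 1, by omega⟩
    have hm : m + 1 ≤ n := hk2
    simp only [Nat.add_sub_cancel]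
    rw [(Fshift_hasDerivAt n (m+1) x hx).deriv]
    have ew : ((1:ℝ)-x) ^ (((m+1:ℕ):ℤ) - (n:ℤ))
        = (1-x) ^ (((m+1:ℕ):ℤ) - (n:ℤ) - 1) * (1-x) := by
      have h := zpow_add_one₀ hx (((m+1:ℕ):ℤ) - (n:ℤ) - 1)
      rw [sub_add_cancel] at h
      exact h
    have hdiv : (n:ℝ) / (1 - x) * Fshift n (m+1) x
        = (n:ℝ) * ((((n + (m+1)).factorial : ℝ) / ((m+1).factorial : ℝ)) *
          ((1-x) ^ (((m+1:ℕ):ℤ) - (n:ℤ) - 1) *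
            ∑ j ∈ Finset.range (n + 1), aco n (m+1) j * x ^ j)) := by
      rw [Fshift_eq, ew]
      field_simp
    rw [hdiv, Fshift_eq n (m+1) x, Fshift_eq n m x, ew,
        show ((m:ℤ) - (n:ℤ)) = ((m+1:ℕ):ℤ) - (n:ℤ) - 1 from by push_cast; ring]
    have hS := sumB' n m hm x
    have hC : (((n + m).factorial : ℝ) / (m.factorial : ℝ)) * ((n:ℝ) + ((m:ℝ)+1))
        = (((n + (m+1)).factorial : ℝ) / ((m+1).factorial : ℝ)) * ((m:ℝ)+1) := by
      rw [show n + (m+1) = (n+m) + 1 from rfl, Nat.factorial_succ, Nat.factorial_succ]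
      have h1 : ((m.factorial : ℝ)) ≠ 0 := by positivity
      push_cast
      field_simp
      ring
    rw [show (((((m+1:ℕ):ℤ) - (n:ℤ)) : ℤ) : ℝ) = (m:ℝ) + 1 - (n:ℝ) from by push_cast; ring,
       show ((n:ℝ) + ((m+1:ℕ):ℝ)) = (n:ℝ) + ((m:ℝ)+1) from by push_cast; ring]
    linear_combination
      ((((n + (m+1)).factorial : ℝ) / ((m+1).factorial : ℝ)) *
        ((1-x) ^ (((m+1:ℕ):ℤ) - (n:ℤ) - 1))) * hS
      - ((1-x) ^ (((m+1:ℕ):ℤ) - (n:ℤ) - 1) *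
          ∑ j ∈ Finset.range (n + 1), aco n m j * x ^ j) * hC
  · intro k hk
    rw [(Fshift_hasDerivAt n k x hx).deriv]
    have ew : ((1:ℝ)-x) ^ ((k:ℤ) - (n:ℤ))
        = (1-x) ^ ((k:ℤ) - (n:ℤ) - 1) * (1-x) := by
      have h := zpow_add_one₀ hx ((k:ℤ) - (n:ℤ) - 1)
      rw [sub_add_cancel] at h
      exact h
    rw [Fshift_eq n k x, Fshift_eq n (k+1) x,
        show (((k+1:ℕ):ℤ) - (n:ℤ)) = ((k:ℤ) - (n:ℤ)) + 1 from by push_cast; ring,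
        zpow_add_one₀ hx, sumA n k hk x, ew]
    have hC : (((n + (k+1)).factorial : ℝ) / ((k+1).factorial : ℝ))
        = (((n + k).factorial : ℝ) / (k.factorial : ℝ)) * ((n:ℝ)+k+1) / ((k:ℝ)+1) := by
      rw [show n + (k+1) = (n+k) + 1 from rfl, Nat.factorial_succ, Nat.factorial_succ]
      have h1 : ((k.factorial : ℝ)) ≠ 0 := by positivity
      have h2 : (0:ℝ) < (k:ℝ) + 1 := by positivity
      push_cast
      field_simp
    rw [show ((((k:ℤ) - (n:ℤ)) : ℤ) : ℝ) = (k:ℝ) - (n:ℝ) from by push_cast; ring]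
    linear_combination
      (((n:ℝ) - k) * ((1-x) ^ ((k:ℤ) - (n:ℤ) - 1) * (1-x)^2 *
          ∑ j ∈ Finset.range (n + 1), aco n (k+1) j * x ^ j)) * hC
end

section
/- Let W be a complex vector space spanned by linearly independent vectors F(u), u ∈ D ⊂ ℂ with D = {u_0 + m : m ∈ ℤ, j_− < m < j_+}. Suppose A_0, D_0 are linear operators on W and α, δ scalars such that (A_0 + αu)F(u) = Δ_−(u − 1/2)F(u−1) and (D_0 + δu)F(u) = Δ_+(u + 1/2)F(u+1) for appropriate u ∈ D, where Δ(u) := Δ_+(u)Δ_−(u) = αδ u² + Q_1 u + Q_0 for scalars Q_0, Q_1. Then [D_0, A_0] F(u) = (α D_0 + δ A_0 − Q_1) F(u) for all u ∈ D, i.e. [D_0, A_0] = α D_0 + δ A_0 − Q_1 on W. -/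
/-!
Write `A₀ F(u) = Δ₋(u - 1/2) F(u - 1) - αu F(u)` and `D₀ F(u) = Δ₊(u + 1/2) F(u + 1) - δu F(u)`.
Expanding `D₀ A₀ F(u)` and `A₀ D₀ F(u)`, the terms in `F(u ± 1)` reassemble into
`α D₀ F(u) + δ A₀ F(u)`, and the coefficient of `F(u)` is `Δ(u - 1/2) - Δ(u + 1/2) + 2αδu = -Q₁`,
because `Δ` is quadratic with leading coefficient `αδ`. At an endpoint of `D` the missing vector
`F(u ± 1)` only ever appears multiplied by the vanishing factor `Δ∓(u ± 1/2)`. Both operators agree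
on the spanning family `F(D)`, hence on `W`.
-/

theorem smul_apply_eq_of_eq_zero_or {R W : Type*} [CommRing R] [AddCommGroup W] [Module R W]
    {T : Module.End R W} {s μ c : R} {x y : W}
    (h : s = 0 ∨ T y + μ • y = c • x) : s • T y = (s * c) • x - (s * μ) • y := by
  rcases h with rfl | h
  · simp
  · rw [eq_sub_of_add_eq h, smul_sub, smul_smul, smul_smul]

theorem mul_sub_half_eq_mul_add_half_sub {K : Type*} [Field K] [NeZero (2 : K)]
    {f g : K → K} {a b c : K} (hfg : ∀ u, f u * g u = a * u ^ 2 + b * u + c) (u : K) :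
    g (u - 1 / 2) * f (u - 1 / 2) = f (u + 1 / 2) * g (u + 1 / 2) - 2 * a * u - b := by
  have h2 : (2 : K) * (1 / 2) = 1 := mul_one_div_cancel two_ne_zero
  linear_combination hfg (u - 1 / 2) - hfg (u + 1 / 2) + (-2 * a * u - b) * h2

theorem commutator_apply_of_shift {K W : Type*} [Field K] [NeZero (2 : K)] [AddCommGroup W]
    [Module K W] {A₀ D₀ : Module.End K W} {α δ Q₀ Q₁ : K} {F : K → W} {Δp Δm : K → K}
    (hΔ : ∀ u, Δp u * Δm u = α * δ * u ^ 2 + Q₁ * u + Q₀) {u : K}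
    (hA : A₀ (F u) + (α * u) • F u = Δm (u - 1 / 2) • F (u - 1))
    (hD : D₀ (F u) + (δ * u) • F u = Δp (u + 1 / 2) • F (u + 1))
    (hA_succ : Δp (u + 1 / 2) = 0 ∨
      A₀ (F (u + 1)) + (α * (u + 1)) • F (u + 1) = Δm (u + 1 / 2) • F u)
    (hD_pred : Δm (u - 1 / 2) = 0 ∨
      D₀ (F (u - 1)) + (δ * (u - 1)) • F (u - 1) = Δp (u - 1 / 2) • F u) :
    (D₀ * A₀ - A₀ * D₀) (F u) = (α • D₀ + δ • A₀ - algebraMap K (Module.End K W) Q₁) (F u) := by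
  have hAu := eq_sub_of_add_eq hA
  have hDu := eq_sub_of_add_eq hD
  simp only [LinearMap.sub_apply, Module.End.mul_apply, LinearMap.add_apply,
    LinearMap.smul_apply, Module.algebraMap_end_apply]
  rw [hAu, hDu, map_sub, map_sub, map_smul, map_smul, map_smul, map_smul, hAu, hDu,
    smul_apply_eq_of_eq_zero_or hA_succ, smul_apply_eq_of_eq_zero_or hD_pred,
    mul_sub_half_eq_mul_add_half_sub hΔ]
  module

theorem prop54_commutator_general {W : Type*} [AddCommGroup W] [Module ℂ W]
    (A₀ D₀ : Module.End ℂ W) (α δ Q₀ Q₁ : ℂ)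
    (Dset : Set ℂ)
    (F : ℂ → W) (Δp Δm : ℂ → ℂ)
    (hspan : Submodule.span ℂ (F '' Dset) = ⊤)
    (hA : ∀ u ∈ Dset, A₀ (F u) + (α * u) • F u = Δm (u - 1/2) • F (u - 1))
    (hD : ∀ u ∈ Dset, D₀ (F u) + (δ * u) • F u = Δp (u + 1/2) • F (u + 1))
    (hbdry : ∀ u ∈ Dset, (u - 1 ∈ Dset ∨ Δm (u - 1/2) = 0)
      ∧ (u + 1 ∈ Dset ∨ Δp (u + 1/2) = 0))
    (hΔ : ∀ u : ℂ, Δp u * Δm u = α * δ * u ^ 2 + Q₁ * u + Q₀) :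
    (∀ u ∈ Dset, (D₀ * A₀ - A₀ * D₀) (F u)
      = (α • D₀ + δ • A₀ - algebraMap ℂ (Module.End ℂ W) Q₁) (F u))
    ∧ D₀ * A₀ - A₀ * D₀ = α • D₀ + δ • A₀ - algebraMap ℂ (Module.End ℂ W) Q₁ := by
  have hpoint : ∀ u ∈ Dset, (D₀ * A₀ - A₀ * D₀) (F u)
      = (α • D₀ + δ • A₀ - algebraMap ℂ (Module.End ℂ W) Q₁) (F u) := by
    intro u hu
    refine commutator_apply_of_shift hΔ (hA u hu) (hD u hu) ?_ ?_
    · refine (hbdry u hu).2.symm.imp_right fun h => ?_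
      convert hA (u + 1) h using 3 <;> ring
    · refine (hbdry u hu).1.symm.imp_right fun h => ?_
      convert hD (u - 1) h using 3 <;> ring
  exact ⟨hpoint, LinearMap.ext_on hspan (by rintro _ ⟨u, hu, rfl⟩; exact hpoint u hu)⟩

/-- Converse construction (Proposition 5.4, commutator part): if `A(u) = A₀ + αu` and
`D(u) = D₀ + δu` act on linearly independent vectors `F(u)`, `u ∈ D`, as parameter shift
operators with `Δ₊(u)Δ₋(u) = αδu² + Q₁u + Q₀`, where at a boundary point of `D` the
corresponding factor `Δ∓` vanishes, then `[D₀, A₀] = αD₀ + δA₀ - Q₁` on `W`. -/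
theorem prop54_commutator {W : Type*} [AddCommGroup W] [Module ℂ W]
    (A₀ D₀ : Module.End ℂ W) (α δ Q₀ Q₁ : ℂ)
    (Dset : Set ℂ) (u₀ : ℂ) (jm jp : ℤ → Prop)
    (hDset : Dset = {z : ℂ | ∃ m : ℤ, z = u₀ + m ∧ jm m ∧ jp m})
    (F : ℂ → W) (Δp Δm : ℂ → ℂ)
    (hindep : LinearIndependent ℂ (fun u : Dset => F u))
    (hspan : Submodule.span ℂ (F '' Dset) = ⊤)
    (hA : ∀ u ∈ Dset, A₀ (F u) + (α * u) • F u = Δm (u - 1/2) • F (u - 1))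
    (hD : ∀ u ∈ Dset, D₀ (F u) + (δ * u) • F u = Δp (u + 1/2) • F (u + 1))
    (hbdry : ∀ u ∈ Dset, (u - 1 ∈ Dset ∨ Δm (u - 1/2) = 0)
      ∧ (u + 1 ∈ Dset ∨ Δp (u + 1/2) = 0))
    (hΔ : ∀ u : ℂ, Δp u * Δm u = α * δ * u ^ 2 + Q₁ * u + Q₀) :
    (∀ u ∈ Dset, (D₀ * A₀ - A₀ * D₀) (F u)
      = (α • D₀ + δ • A₀ - algebraMap ℂ (Module.End ℂ W) Q₁) (F u))
    ∧ D₀ * A₀ - A₀ * D₀ = α • D₀ + δ • A₀ - algebraMap ℂ (Module.End ℂ W) Q₁ :=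
  prop54_commutator_general A₀ D₀ α δ Q₀ Q₁ Dset F Δp Δm hspan hA hD hbdry hΔ
end
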